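/- arXiv:2309.02635 — 7 statements merged into one kernel-verified Lean document; each statement's English description precedes it below -/
import Mathlib

section
/- Let g be a finite simple graph, k a natural number, and S ⊆ V(g) a set of vertices. Suppose u ∈ V(g)\S satisfies |Ē(S ∪ {u})| ≤ k and d_g(u) ≥ |V(g)| − 2. Then for every k-defective clique C of g with S ⊆ C ⊆ V(g) there exists a k-defective clique C′ of g with S ∪ {u} ⊆ C′ ⊆ V(g) and |C′| ≥ |C|. In particular, some maximum k-defective clique of g containing S also contains u (correctness of reduction rule RR2). -/
/-!
The vertex `u` has at most one non-neighbour `w`, so adding `u` to a set creates at most one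
new non-edge, namely `uw`. Given `C ⊇ S` not containing `u`: if `w ∉ C`, take `C ∪ {u}`; if
`w ∈ C \ S`, exchange `w` for `u`; if `w ∈ S` and some non-edge of `C` has an endpoint
`v ∉ S`, exchange `v` for `u`, losing that non-edge and gaining at most `uw`. Otherwise all
non-edges of `C` lie in `S`, while `S ∪ {u}` has the extra non-edge `uw`, so
`|Ē(C ∪ {u})| ≤ |Ē(C)| + 1 ≤ |Ē(S)| + 1 ≤ |Ē(S ∪ {u})| ≤ k`.
-/

open Finset

variable {V : Type*} [Fintype V] [DecidableEq V]

/-- The set of non-edges of `S`: unordered pairs of distinct vertices of `S`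
that are not adjacent in `G`. -/
def nonEdges (G : SimpleGraph V) [DecidableRel G.Adj] (S : Finset V) : Finset (Sym2 V) :=
  ((S ×ˢ S).filter fun p => p.1 ≠ p.2 ∧ ¬ G.Adj p.1 p.2).image fun p => s(p.1, p.2)

omit [DecidableEq V] in
theorem SimpleGraph.eq_of_adj_of_degree_le_one {G : SimpleGraph V} [DecidableRel G.Adj]
    {u x y : V} (hu : G.degree u ≤ 1) (hx : G.Adj u x) (hy : G.Adj u y) : x = y := by
  rw [← card_neighborFinset_eq_degree] at hu
  exact card_le_one.1 hu x (by simpa) y (by simpa)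

theorem SimpleGraph.degree_compl_le_one_of_card_sub_two_le {G : SimpleGraph V}
    [DecidableRel G.Adj] {u : V} (h : Fintype.card V - 2 ≤ G.degree u) : Gᶜ.degree u ≤ 1 := by
  rw [degree_compl]; omega

section nonEdges

variable {G : SimpleGraph V} [DecidableRel G.Adj] {S T : Finset V} {u : V}

omit [Fintype V] in
theorem mem_nonEdges {x y : V} :
    s(x, y) ∈ nonEdges G S ↔ x ∈ S ∧ y ∈ S ∧ x ≠ y ∧ ¬ G.Adj x y := by
  simp only [nonEdges, mem_image, mem_filter, mem_product, Prod.exists, Sym2.eq_iff]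
  constructor
  · rintro ⟨a, b, ⟨⟨ha, hb⟩, hne, hadj⟩, ⟨rfl, rfl⟩ | ⟨rfl, rfl⟩⟩
    · exact ⟨ha, hb, hne, hadj⟩
    · exact ⟨hb, ha, hne.symm, fun h => hadj h.symm⟩
  · rintro ⟨hx, hy, hne, hadj⟩
    exact ⟨x, y, ⟨⟨hx, hy⟩, hne, hadj⟩, Or.inl ⟨rfl, rfl⟩⟩

omit [Fintype V] in
theorem mem_nonEdges_iff {e : Sym2 V} :
    e ∈ nonEdges G S ↔ (∀ v ∈ e, v ∈ S) ∧ ¬ e.IsDiag ∧ e ∉ G.edgeSet := by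
  induction e using Sym2.ind with
  | h x y => simp [mem_nonEdges, and_assoc]

omit [Fintype V] in
theorem nonEdges_mono (h : S ⊆ T) : nonEdges G S ⊆ nonEdges G T :=
  image_subset_image (filter_subset_filter _ (product_subset_product h h))

omit [Fintype V] in
theorem card_nonEdges_lt {e : Sym2 V} (h : S ⊆ T) (heT : e ∈ nonEdges G T)
    (heS : e ∉ nonEdges G S) : #(nonEdges G S) < #(nonEdges G T) :=
  card_lt_card ((ssubset_iff_of_subset (nonEdges_mono h)).2 ⟨e, heT, heS⟩)

omit [Fintype V] in
theorem nonEdges_insert_subset :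
    nonEdges G (insert u T) ⊆ nonEdges G T ∪ (T.filter (Gᶜ.Adj u)).image (s(u, ·)) := by
  intro e he
  induction e using Sym2.ind with
  | h a b =>
    obtain ⟨ha, hb, hne, hadj⟩ := mem_nonEdges.1 he
    simp only [mem_union, mem_image, mem_filter, SimpleGraph.compl_adj, mem_nonEdges]
    rcases mem_insert.1 ha with rfl | haT <;> rcases mem_insert.1 hb with rfl | hbT
    · exact absurd rfl hne
    · exact Or.inr ⟨b, ⟨hbT, hne, hadj⟩, rfl⟩
    · exact Or.inr ⟨a, ⟨haT, hne.symm, fun h => hadj h.symm⟩, Sym2.eq_swap⟩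
    · exact Or.inl ⟨haT, hbT, hne, hadj⟩

omit [Fintype V] in
theorem card_nonEdges_insert_le :
    #(nonEdges G (insert u T)) ≤ #(nonEdges G T) + #(T.filter (Gᶜ.Adj u)) :=
  (card_le_card nonEdges_insert_subset).trans (card_union_le _ _ |>.trans
    (Nat.add_le_add_left card_image_le _))

omit [Fintype V] in
theorem card_nonEdges_insert_le_of_forall_adj (h : ∀ x ∈ T, x ≠ u → G.Adj u x) :
    #(nonEdges G (insert u T)) ≤ #(nonEdges G T) := by
  have hT : T.filter (Gᶜ.Adj u) = ∅ :=
    filter_eq_empty_iff.2 fun x hx ⟨hne, hadj⟩ => hadj (h x hx (Ne.symm hne))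
  simpa only [hT, card_empty, add_zero] using card_nonEdges_insert_le (G := G) (u := u) (T := T)

theorem card_nonEdges_insert_le_add_one (hu : Gᶜ.degree u ≤ 1) :
    #(nonEdges G (insert u T)) ≤ #(nonEdges G T) + 1 := by
  have : #(T.filter (Gᶜ.Adj u)) ≤ Gᶜ.degree u := by
    rw [← SimpleGraph.card_neighborFinset_eq_degree]
    exact card_le_card fun x hx => by simpa using (mem_filter.1 hx).2
  exact card_nonEdges_insert_le.trans (by omega)

theorem card_nonEdges_insert_le_or_exists_exchange {k : ℕ} {C : Finset V}
    (hdeg : Gᶜ.degree u ≤ 1) (huC : u ∉ C) (hSC : S ⊆ C)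
    (hC : #(nonEdges G C) ≤ k) (hS : #(nonEdges G (insert u S)) ≤ k) :
    #(nonEdges G (insert u C)) ≤ k ∨
      ∃ v ∈ C, v ∉ S ∧ #(nonEdges G (insert u (C.erase v))) ≤ k := by
  by_cases hall : ∀ x ∈ C, x ≠ u → G.Adj u x
  · exact .inl ((card_nonEdges_insert_le_of_forall_adj hall).trans hC)
  push Not at hall
  obtain ⟨w, hwC, hwu, hw⟩ := hall
  by_cases hwS : w ∉ S
  · refine .inr ⟨w, hwC, hwS, (card_nonEdges_insert_le_of_forall_adj fun x hx hxu => ?_).trans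
      ((card_le_card (nonEdges_mono (erase_subset w C))).trans hC)⟩
    by_contra hux
    exact (mem_erase.1 hx).1
      (SimpleGraph.eq_of_adj_of_degree_le_one hdeg ⟨hxu.symm, hux⟩ ⟨hwu.symm, hw⟩)
  rw [not_not] at hwS
  by_cases hCS : nonEdges G C ⊆ nonEdges G S
  · have huwS : s(u, w) ∉ nonEdges G S := fun h => huC (hSC (mem_nonEdges.1 h).1)
    have huw : s(u, w) ∈ nonEdges G (insert u S) :=
      mem_nonEdges.2 ⟨mem_insert_self u S, mem_insert_of_mem hwS, hwu.symm, hw⟩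
    refine .inl ?_
    calc #(nonEdges G (insert u C)) ≤ #(nonEdges G C) + 1 := card_nonEdges_insert_le_add_one hdeg
      _ ≤ #(nonEdges G S) + 1 := by grw [card_le_card hCS]
      _ ≤ #(nonEdges G (insert u S)) := card_nonEdges_lt (subset_insert u S) huw huwS
      _ ≤ k := hS
  obtain ⟨e, heC, heS⟩ := not_subset.1 hCS
  obtain ⟨heC', hdiag, hedge⟩ := mem_nonEdges_iff.1 heC
  obtain ⟨v, hve, hvS⟩ : ∃ v ∈ e, v ∉ S := by
    by_contra! h
    exact heS (mem_nonEdges_iff.2 ⟨h, hdiag, hedge⟩)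
  have he : e ∉ nonEdges G (C.erase v) := fun h =>
    (mem_erase.1 ((mem_nonEdges_iff.1 h).1 v hve)).1 rfl
  refine .inr ⟨v, heC' v hve, hvS, ?_⟩
  calc #(nonEdges G (insert u (C.erase v))) ≤ #(nonEdges G (C.erase v)) + 1 :=
        card_nonEdges_insert_le_add_one hdeg
    _ ≤ #(nonEdges G C) := card_nonEdges_lt (erase_subset v C) heC he
    _ ≤ k := hC

end nonEdges

theorem rr2_correct_general (G : SimpleGraph V) [DecidableRel G.Adj] (k : ℕ)
    (S : Finset V) (u : V)
    (h1 : (nonEdges G (insert u S)).card ≤ k)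
    (h2 : Fintype.card V - 2 ≤ G.degree u) :
    ∀ C : Finset V, S ⊆ C → (nonEdges G C).card ≤ k →
      ∃ C' : Finset V, insert u S ⊆ C' ∧ (nonEdges G C').card ≤ k ∧ C.card ≤ C'.card := by
  intro C hSC hC
  by_cases huC : u ∈ C
  · exact ⟨C, insert_subset huC hSC, hC, le_rfl⟩
  have hdeg := SimpleGraph.degree_compl_le_one_of_card_sub_two_le h2
  obtain hext | ⟨v, hvC, hvS, hexch⟩ :=
    card_nonEdges_insert_le_or_exists_exchange hdeg huC hSC hC h1
  · exact ⟨insert u C, insert_subset_insert u hSC, hext, card_le_card (subset_insert u C)⟩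
  · refine ⟨insert u (C.erase v), insert_subset_insert u (subset_erase.2 ⟨hSC, hvS⟩),
      hexch, ?_⟩
    rw [card_insert_of_notMem (fun h => huC (mem_of_mem_erase h)), card_erase_add_one hvC]

/-- Correctness of reduction rule RR2: if `u ∉ S` satisfies `|Ē(S ∪ {u})| ≤ k` and
`d_g(u) ≥ |V(g)| − 2`, then every `k`-defective clique `C ⊇ S` can be replaced by a
`k`-defective clique `C' ⊇ S ∪ {u}` that is at least as large. -/
theorem rr2_correct (G : SimpleGraph V) [DecidableRel G.Adj] (k : ℕ)
    (S : Finset V) (u : V) (hu : u ∉ S)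
    (h1 : (nonEdges G (insert u S)).card ≤ k)
    (h2 : Fintype.card V - 2 ≤ G.degree u) :
    ∀ C : Finset V, S ⊆ C → (nonEdges G C).card ≤ k →
      ∃ C' : Finset V, insert u S ⊆ C' ∧ (nonEdges G C').card ≤ k ∧ C.card ≤ C'.card :=
  rr2_correct_general G k S u h1 h2
end

section
/- Let G be a finite simple graph, k a natural number, and C a k-defective clique of G. If u, v ∈ C are adjacent in G, then |C| ≤ |N_G(u) ∩ N_G(v)| + 2 + k, where N_G(u) ∩ N_G(v) is the set of common neighbors of u and v in G (correctness of the edge reduction rule RR6: an edge whose endpoints have fewer than lb − k − 1 common neighbors lies in no k-defective clique of size greater than lb). -/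
open Finset

variable {V : Type*} [Fintype V] [DecidableEq V]

/-!
Every `w ∈ C` other than `u` and `v` is either a common neighbour of `u` and `v`,
or it is non-adjacent to one of them, say `x`, and then `s(x, w)` is a non-edge of `C`.
Since `w` is the endpoint of `s(x, w)` outside `{u, v}`, distinct such `w` give distinct
non-edges, so there are at most `k` of them.
-/

section

variable (G : SimpleGraph V) [DecidableRel G.Adj]

omit [Fintype V] in
lemma mk_mem_nonEdges {S : Finset V} {x y : V} (hx : x ∈ S) (hy : y ∈ S) (hxy : x ≠ y)
    (h : ¬ G.Adj x y) : s(x, y) ∈ nonEdges G S :=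
  mem_image.2 ⟨(x, y), mem_filter.2 ⟨mem_product.2 ⟨hx, hy⟩, hxy, h⟩, rfl⟩

omit [Fintype V] in
lemma card_filter_not_adj_both_le_card_nonEdges {S : Finset V} {u v : V}
    (hu : u ∈ S) (hv : v ∈ S) :
    ((S \ {u, v}).filter fun w => ¬ (G.Adj u w ∧ G.Adj v w)).card ≤ (nonEdges G S).card := by
  refine card_le_card_of_injOn (fun w => if G.Adj u w then s(v, w) else s(u, w)) ?_ ?_
  · intro w hw
    dsimp only
    simp only [coe_filter, mem_sdiff, mem_insert, mem_singleton, not_or, Set.mem_ofPred_eq] at hw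
    obtain ⟨⟨hwS, hwu, hwv⟩, hmiss⟩ := hw
    by_cases huw : G.Adj u w
    · rw [if_pos huw, mem_coe]
      exact mk_mem_nonEdges G hv hwS (Ne.symm hwv) fun hvw => hmiss ⟨huw, hvw⟩
    · rw [if_neg huw, mem_coe]
      exact mk_mem_nonEdges G hu hwS (Ne.symm hwu) huw
  · intro w hw w' hw' heq
    simp only [coe_filter, mem_sdiff, mem_insert, mem_singleton, Set.mem_ofPred_eq] at hw hw'
    dsimp only at heq
    split_ifs at heq <;> simp only [Sym2.eq_iff] at heq <;> grind

end

theorem rr6_correct_general (G : SimpleGraph V) [DecidableRel G.Adj] (k : ℕ)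
    (C : Finset V) (hC : (nonEdges G C).card ≤ k)
    (u v : V) (hu : u ∈ C) (hv : v ∈ C) :
    C.card ≤ (G.neighborFinset u ∩ G.neighborFinset v).card + 2 + k := by
  have hcommon : ((C \ {u, v}).filter fun w => G.Adj u w ∧ G.Adj v w) ⊆
      G.neighborFinset u ∩ G.neighborFinset v := by
    intro w hw
    simpa only [mem_inter, SimpleGraph.mem_neighborFinset] using (mem_filter.1 hw).2
  calc C.card ≤ (C \ {u, v}).card + ({u, v} : Finset V).card := card_le_card_sdiff_add_card
    _ ≤ (G.neighborFinset u ∩ G.neighborFinset v).card + (nonEdges G C).card + 2 := by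
      rw [← card_filter_add_card_filter_not (fun w => G.Adj u w ∧ G.Adj v w)]
      exact add_le_add (add_le_add (card_le_card hcommon)
        (card_filter_not_adj_both_le_card_nonEdges G hu hv)) card_le_two
    _ ≤ _ := by omega

/-- Correctness of the edge reduction rule RR6: if `C` is a `k`-defective clique of `G`
and `u, v ∈ C` are adjacent, then `|C| ≤ |N_G(u) ∩ N_G(v)| + 2 + k`. -/
theorem rr6_correct (G : SimpleGraph V) [DecidableRel G.Adj] (k : ℕ)
    (C : Finset V) (hC : (nonEdges G C).card ≤ k)
    (u v : V) (hu : u ∈ C) (hv : v ∈ C) (huv : G.Adj u v) :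
    C.card ≤ (G.neighborFinset u ∩ G.neighborFinset v).card + 2 + k :=
  rr6_correct_general G k C hC u v hu hv
end

section
/- Let g be a finite simple graph, k a natural number, S ⊆ V(g), and let π_1, …, π_c be a partition of V(g)\S into independent sets of g. For each i, enumerate π_i as v_{i,1}, …, v_{i,|π_i|} in non-decreasing order of |N̄_S(·)| and define the weight w(v_{i,j}) = |N̄_S(v_{i,j})| + j − 1. Let u_1, u_2, …, u_t be an enumeration of V(g)\S in non-decreasing order of w(·). Then for every k-defective clique C of g with S ⊆ C ⊆ V(g), ∑_{j=1}^{|C\S|} w(u_j) ≤ k − |Ē(S)|; consequently |C| ≤ |S| + i*, where i* is the largest index i such that ∑_{j=1}^{i} w(u_j) ≤ k − |Ē(S)| (correctness of the improved coloring-based upper bound UB1). -/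
/-!
Let `D = C \ S` meet the colour class `π i` in `mᵢ` vertices. Counting non-edges inside `S`,
between `S` and `D`, and inside each (independent) `D ∩ π i` gives
`|Ē(S)| + ∑_{v ∈ D} |N̄_S(v)| + ∑ᵢ (mᵢ choose 2) ≤ |Ē(C)| ≤ k`.
On the weight side, the first `mᵢ` vertices of each `π i` form a set of `|D|` vertices of total
weight at most `∑_{v ∈ D} |N̄_S(v)| + ∑ᵢ (mᵢ choose 2)`: in each class the `mᵢ` smallest values of
`|N̄_S|` are at most its values on `D ∩ π i`, and the offsets add `0 + ⋯ + (mᵢ - 1)`. The `|D|`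
smallest weights sum to no more than that, and maximality of `i*` gives `|D| ≤ i*`.
-/

open Finset

variable {V : Type*} [Fintype V] [DecidableEq V]

/-- The set of non-neighbors of `u` among `S \ {u}`. -/
def nonNbrs (G : SimpleGraph V) [DecidableRel G.Adj] (S : Finset V) (u : V) : Finset V :=
  (S.erase u).filter fun w => ¬ G.Adj u w

open Function

section Prefix

variable {n : ℕ}

lemma val_le_val_orderEmbedding {d : ℕ} (e : Fin d ↪o Fin n) (i : Fin d) : (i : ℕ) ≤ e i := by
  have hsub : (Iio i).map e.toEmbedding ⊆ Iio (e i) := by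
    intro x hx
    obtain ⟨j, hj, rfl⟩ := mem_map.1 hx
    simpa using hj
  simpa using card_le_card hsub

lemma sum_filter_val_lt_eq_sum_range {M : Type*} [AddCommMonoid M] {m : ℕ} (hm : m ≤ n)
    (g : ℕ → M) : ∑ j ∈ univ.filter (fun j : Fin n => (j : ℕ) < m), g j = ∑ j ∈ range m, g j := by
  rw [sum_filter, Fin.sum_univ_eq_sum_range (fun j => if j < m then g j else 0), ← sum_filter]
  congr 1
  grind

lemma sum_filter_val_lt_le_sum_of_monotone {M : Type*} [AddCommMonoid M] [PartialOrder M]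
    [IsOrderedAddMonoid M] {f : Fin n → M} (hf : Monotone f) (J : Finset (Fin n)) :
    ∑ j ∈ univ.filter (fun j : Fin n => (j : ℕ) < #J), f j ≤ ∑ j ∈ J, f j := by
  have hJn : #J ≤ n := by simpa using card_le_univ J
  set e := J.orderEmbOfFin rfl
  have hprefix : univ.filter (fun j : Fin n => (j : ℕ) < #J) = univ.image (Fin.castLE hJn) := by
    ext j
    simp only [mem_filter, mem_univ, true_and, mem_image]
    exact ⟨fun hj => ⟨⟨j, hj⟩, rfl⟩, by rintro ⟨l, rfl⟩; exact l.2⟩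
  have hJ : univ.image e = J := by
    rw [← coe_inj, coe_image, coe_univ, Set.image_univ, range_orderEmbOfFin]
  conv_rhs => rw [← hJ, sum_image e.injective.injOn]
  rw [hprefix, sum_image (Fin.castLE_injective hJn).injOn]
  exact sum_le_sum fun l _ => hf (Fin.le_def.2 (val_le_val_orderEmbedding e l))

lemma sum_filter_val_lt_card_le_sum {α M : Type*} [DecidableEq α] [AddCommMonoid M]
    [PartialOrder M] [IsOrderedAddMonoid M] {u : Fin n → α} (hu : Injective u) {w : α → M}
    (hwu : Monotone (w ∘ u)) {T : Finset α} (hT : T ⊆ univ.image u) :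
    ∑ j ∈ univ.filter (fun j : Fin n => (j : ℕ) < #T), w (u j) ≤ ∑ v ∈ T, w v := by
  set J := univ.filter (fun j => u j ∈ T)
  have hJ : J.image u = T := by
    ext v
    simp only [J, mem_image, mem_filter, mem_univ, true_and]
    refine ⟨by rintro ⟨j, hj, rfl⟩; exact hj, fun hv => ?_⟩
    obtain ⟨j, -, rfl⟩ := mem_image.1 (hT hv)
    exact ⟨j, hv, rfl⟩
  rw [← hJ, card_image_of_injective _ hu, sum_image hu.injOn]
  exact sum_filter_val_lt_le_sum_of_monotone hwu J

end Prefix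

section Weights

variable {α : Type*} [DecidableEq α]

lemma sum_filter_val_lt_card_le_sum_add_choose {p : ℕ} {v : Fin p → α} (hv : Injective v)
    {f w : α → ℕ} (hf : Monotone (f ∘ v)) (hw : ∀ j, w (v j) = f (v j) + j) {A : Finset α}
    (hA : A ⊆ univ.image v) :
    ∑ j ∈ univ.filter (fun j : Fin p => (j : ℕ) < #A), w (v j) ≤ ∑ x ∈ A, f x + (#A).choose 2 := by
  have hAp : #A ≤ p := (card_le_card hA).trans (card_image_le.trans_eq (card_fin p))
  have hindex : ∑ j ∈ univ.filter (fun j : Fin p => (j : ℕ) < #A), (j : ℕ) = (#A).choose 2 := by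
    rw [sum_filter_val_lt_eq_sum_range hAp fun j => j, sum_range_id, Nat.choose_two_right]
  simp only [hw, sum_add_distrib, hindex]
  gcongr
  exact sum_filter_val_lt_card_le_sum hv hf hA

variable {c n : ℕ} {π : Fin c → Finset α} {vfun : (i : Fin c) → Fin #(π i) → α} {f w : α → ℕ}
  {u : Fin n → α}

lemma sum_filter_val_lt_card_le_sum_add_sum_choose (hdisj : Pairwise (Disjoint on π))
    (hinjv : ∀ i, Injective (vfun i)) (himgv : ∀ i, univ.image (vfun i) = π i)
    (hmonov : ∀ i, Monotone (f ∘ vfun i)) (hw : ∀ i j, w (vfun i j) = f (vfun i j) + j)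
    (hinju : Injective u) (hmonou : Monotone (w ∘ u))
    (hπu : univ.biUnion π ⊆ univ.image u) {D : Finset α} (hD : D ⊆ univ.biUnion π) :
    ∑ j ∈ univ.filter (fun j : Fin n => (j : ℕ) < #D), w (u j)
      ≤ ∑ x ∈ D, f x + ∑ i, (#(D ∩ π i)).choose 2 := by
  set T : Fin c → Finset α := fun i =>
    (univ.filter fun j : Fin #(π i) => (j : ℕ) < #(D ∩ π i)).image (vfun i)
  have hTπ : ∀ i, T i ⊆ π i := fun i => by
    rw [← himgv i]
    exact image_subset_image (filter_subset _ _)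
  have hTdisj : Pairwise (Disjoint on T) := fun i j hij => (hdisj hij).mono (hTπ i) (hTπ j)
  have hDdisj : Pairwise (Disjoint on fun i => D ∩ π i) := fun i j hij =>
    (hdisj hij).mono inter_subset_right inter_subset_right
  have hD_eq : D = univ.biUnion fun i => D ∩ π i := by
    rw [← inter_biUnion, inter_eq_left.2 hD]
  have hDπ : ∀ i, D ∩ π i ⊆ univ.image (vfun i) := fun i => (himgv i).symm ▸ inter_subset_right
  have hcardT : #(univ.biUnion T) = #D := by
    rw [card_biUnion (hTdisj.set_pairwise _), hD_eq, card_biUnion (hDdisj.set_pairwise _)]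
    refine sum_congr rfl fun i _ => ?_
    have hle : #(D ∩ π i) ≤ #(π i) := card_le_card inter_subset_right
    rw [card_image_of_injective _ (hinjv i), card_eq_sum_ones,
      sum_filter_val_lt_eq_sum_range hle fun _ => 1]
    simp
  have hsumD : ∑ x ∈ D, f x = ∑ i, ∑ x ∈ D ∩ π i, f x := by
    conv_lhs => rw [hD_eq]
    exact sum_biUnion (hDdisj.set_pairwise _)
  calc ∑ j ∈ univ.filter (fun j : Fin n => (j : ℕ) < #D), w (u j)
      ≤ ∑ x ∈ univ.biUnion T, w x :=
        hcardT ▸ sum_filter_val_lt_card_le_sum hinju hmonou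
          ((biUnion_mono fun i _ => hTπ i).trans hπu)
    _ = ∑ i, ∑ j ∈ univ.filter (fun j : Fin #(π i) => (j : ℕ) < #(D ∩ π i)), w (vfun i j) := by
        rw [sum_biUnion (hTdisj.set_pairwise _)]
        exact sum_congr rfl fun i _ => sum_image (hinjv i).injOn
    _ ≤ ∑ i, (∑ x ∈ D ∩ π i, f x + (#(D ∩ π i)).choose 2) :=
        sum_le_sum fun i _ =>
          sum_filter_val_lt_card_le_sum_add_choose (hinjv i) (hmonov i) (hw i) (hDπ i)
    _ = ∑ x ∈ D, f x + ∑ i, (#(D ∩ π i)).choose 2 := by rw [sum_add_distrib, hsumD]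

end Weights

section NonEdges

variable {α : Type*} [DecidableEq α] (G : SimpleGraph α) [DecidableRel G.Adj]

lemma mk_mem_nonEdges_s7 {T : Finset α} {x y : α} :
    s(x, y) ∈ nonEdges G T ↔ x ∈ T ∧ y ∈ T ∧ x ≠ y ∧ ¬ G.Adj x y := by
  simp only [nonEdges, mem_image, mem_filter, mem_product, Prod.exists, Sym2.eq_iff]
  constructor
  · rintro ⟨a, b, ⟨⟨ha, hb⟩, hab, hadj⟩, ⟨rfl, rfl⟩ | ⟨rfl, rfl⟩⟩
    · exact ⟨ha, hb, hab, hadj⟩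
    · exact ⟨hb, ha, hab.symm, fun h => hadj h.symm⟩
  · rintro ⟨hx, hy, hxy, hadj⟩
    exact ⟨x, y, ⟨⟨hx, hy⟩, hxy, hadj⟩, Or.inl ⟨rfl, rfl⟩⟩

lemma mem_of_mem_nonEdges {T : Finset α} {e : Sym2 α} (he : e ∈ nonEdges G T) {x : α}
    (hx : x ∈ e) : x ∈ T := by
  induction e using Sym2.ind with
  | h a b =>
    obtain ⟨ha, hb, -⟩ := (mk_mem_nonEdges_s7 G).1 he
    rcases Sym2.mem_iff.1 hx with rfl | rfl
    · exact ha
    · exact hb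

lemma nonEdges_mono_s7 {A B : Finset α} (h : A ⊆ B) : nonEdges G A ⊆ nonEdges G B :=
  image_subset_image (filter_subset_filter _ (product_subset_product h h))

lemma disjoint_nonEdges {A B : Finset α} (h : Disjoint A B) :
    Disjoint (nonEdges G A) (nonEdges G B) := by
  refine disjoint_left.2 fun e heA heB => ?_
  induction e using Sym2.ind with
  | h a b =>
    exact disjoint_left.1 h (mem_of_mem_nonEdges G heA (Sym2.mem_mk_left a b))
      (mem_of_mem_nonEdges G heB (Sym2.mem_mk_left a b))

lemma card_nonEdges_of_isIndep {A : Finset α} (hA : ∀ x ∈ A, ∀ y ∈ A, ¬ G.Adj x y) :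
    #(nonEdges G A) = (#A).choose 2 := by
  rw [← Sym2.card_image_offDiag, nonEdges]
  congr 2
  ext p
  simp only [mem_filter, mem_product, mem_offDiag]
  exact ⟨fun ⟨⟨h1, h2⟩, hne, _⟩ => ⟨h1, h2, hne⟩,
    fun ⟨h1, h2, hne⟩ => ⟨⟨h1, h2⟩, hne, hA _ h1 _ h2⟩⟩

lemma sum_choose_card_inter_le_card_nonEdges {ι : Type*} [Fintype ι] {π : ι → Finset α}
    (hdisj : Pairwise (Disjoint on π)) (hind : ∀ i, ∀ x ∈ π i, ∀ y ∈ π i, ¬ G.Adj x y)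
    (D : Finset α) : ∑ i, (#(D ∩ π i)).choose 2 ≤ #(nonEdges G D) :=
  calc ∑ i, (#(D ∩ π i)).choose 2 = ∑ i, #(nonEdges G (D ∩ π i)) :=
        sum_congr rfl fun i _ => (card_nonEdges_of_isIndep G fun x hx y hy =>
          hind i x (mem_inter.1 hx).2 y (mem_inter.1 hy).2).symm
    _ = #(univ.biUnion fun i => nonEdges G (D ∩ π i)) :=
        (card_biUnion fun _ _ _ _ hij => disjoint_nonEdges G
          ((hdisj hij).mono inter_subset_right inter_subset_right)).symm
    _ ≤ #(nonEdges G D) :=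
        card_le_card (biUnion_subset.2 fun _ _ => nonEdges_mono_s7 G inter_subset_left)

lemma nonEdges_insert (T : Finset α) (v : α) :
    nonEdges G (insert v T) = nonEdges G T ∪ (nonNbrs G T v).image fun x => s(v, x) := by
  ext e
  induction e using Sym2.ind with
  | h a b =>
    simp only [mem_union, mem_image, mk_mem_nonEdges_s7, mem_insert, nonNbrs, mem_filter, mem_erase,
      Sym2.eq_iff]
    have := G.adj_comm a b
    grind

lemma card_nonEdges_insert {T : Finset α} {v : α} (hv : v ∉ T) :
    #(nonEdges G (insert v T)) = #(nonEdges G T) + #(nonNbrs G T v) := by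
  rw [nonEdges_insert, card_union_of_disjoint,
    card_image_of_injective _ fun _ _ h => Sym2.congr_right.1 h]
  refine disjoint_left.2 fun e he he' => ?_
  obtain ⟨x, -, rfl⟩ := mem_image.1 he'
  exact hv (mem_of_mem_nonEdges G he (Sym2.mem_mk_left v x))

lemma nonNbrs_union (S T : Finset α) (v : α) :
    nonNbrs G (S ∪ T) v = nonNbrs G S v ∪ nonNbrs G T v := by
  rw [nonNbrs, erase_union_distrib, filter_union, nonNbrs, nonNbrs]

lemma card_nonEdges_union {S D : Finset α} (h : Disjoint S D) :
    #(nonEdges G (S ∪ D)) = #(nonEdges G S) + #(nonEdges G D) + ∑ v ∈ D, #(nonNbrs G S v) := by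
  induction D using Finset.induction_on with
  | empty => simp [nonEdges]
  | insert v D hvD ih =>
    have hvS : v ∉ S := disjoint_right.1 h (mem_insert_self v D)
    have hSD : Disjoint S D := h.mono_right (subset_insert v D)
    have hnbrs : #(nonNbrs G (S ∪ D) v) = #(nonNbrs G S v) + #(nonNbrs G D v) := by
      rw [nonNbrs_union, card_union_of_disjoint]
      exact hSD.mono ((filter_subset _ _).trans (erase_subset v S))
        ((filter_subset _ _).trans (erase_subset v D))
    rw [union_insert, card_nonEdges_insert G (by simp [hvS, hvD]), card_nonEdges_insert G hvD,
      sum_insert hvD, ih hSD, hnbrs]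
    ring

end NonEdges

/-- Correctness of the improved coloring-based upper bound UB1: let `π 0, …, π (c-1)` be
a partition of `V(g) \ S` into independent sets, each part `π i` enumerated as
`vfun i 0, …, vfun i (|π i| − 1)` in non-decreasing order of `|N̄_S(·)|`, and assign the
weight `w (vfun i j) = |N̄_S(vfun i j)| + j` (0-based `j`, i.e. `|N̄_S| + j − 1` for the
1-based index).  Let `u 0, …, u (t-1)` enumerate `V(g) \ S` in non-decreasing order of
`w`.  Then every `k`-defective clique `C` with `S ⊆ C` satisfies
`∑_{j < |C \ S|} w (u j) ≤ k − |Ē(S)|`, and consequently `|C| ≤ |S| + i*`, where `i*` is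
the largest `i ≤ t` whose prefix sum of weights is at most `k − |Ē(S)|`. -/
theorem ub1_correct (G : SimpleGraph V) [DecidableRel G.Adj] (k : ℕ) (S : Finset V)
    {c : ℕ} (π : Fin c → Finset V)
    (hdisj : ∀ i j : Fin c, i ≠ j → Disjoint (π i) (π j))
    (hcover : Finset.univ.biUnion π = Finset.univ \ S)
    (hind : ∀ i : Fin c, ∀ x ∈ π i, ∀ y ∈ π i, ¬ G.Adj x y)
    (vfun : (i : Fin c) → Fin ((π i).card) → V)
    (hinjv : ∀ i, Function.Injective (vfun i))
    (himgv : ∀ i, Finset.image (vfun i) Finset.univ = π i)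
    (hmonov : ∀ i, ∀ j₁ j₂ : Fin ((π i).card), j₁ ≤ j₂ →
      (nonNbrs G S (vfun i j₁)).card ≤ (nonNbrs G S (vfun i j₂)).card)
    (w : V → ℕ)
    (hw : ∀ i : Fin c, ∀ j : Fin ((π i).card),
      w (vfun i j) = (nonNbrs G S (vfun i j)).card + (j : ℕ))
    {t : ℕ} (u : Fin t → V) (hinju : Function.Injective u)
    (himgu : Finset.image u Finset.univ = Finset.univ \ S)
    (hmonou : ∀ j₁ j₂ : Fin t, j₁ ≤ j₂ → w (u j₁) ≤ w (u j₂))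
    (istar : ℕ)
    (histar : IsGreatest {i : ℕ | i ≤ t ∧
      ∑ j ∈ Finset.univ.filter (fun j : Fin t => (j : ℕ) < i), ((w (u j) : ℤ))
        ≤ (k : ℤ) - ((nonEdges G S).card : ℤ)} istar)
    (C : Finset V) (hSC : S ⊆ C) (hC : (nonEdges G C).card ≤ k) :
    (∑ j ∈ Finset.univ.filter (fun j : Fin t => (j : ℕ) < (C \ S).card), ((w (u j) : ℤ))
        ≤ (k : ℤ) - ((nonEdges G S).card : ℤ))
      ∧ C.card ≤ S.card + istar := by
  have hCS : C \ S ⊆ univ \ S := sdiff_subset_sdiff (subset_univ C) le_rfl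
  have hcount : #(nonEdges G S) + ∑ v ∈ C \ S, #(nonNbrs G S v)
      + ∑ i, (#((C \ S) ∩ π i)).choose 2 ≤ k := by
    have hsplit := card_nonEdges_union G (disjoint_sdiff : Disjoint S (C \ S))
    rw [union_sdiff_of_subset hSC] at hsplit
    have hindep := sum_choose_card_inter_le_card_nonEdges G (fun i j hij => hdisj i j hij) hind
      (C \ S)
    omega
  have hweight := sum_filter_val_lt_card_le_sum_add_sum_choose (f := fun v => #(nonNbrs G S v))
    (fun i j hij => hdisj i j hij) hinjv himgv (fun i _ _ h => hmonov i _ _ h) hw hinju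
    (fun _ _ h => hmonou _ _ h) (by rw [hcover, himgu]) (hcover ▸ hCS)
  have hsum : ∑ j ∈ univ.filter (fun j : Fin t => (j : ℕ) < #(C \ S)), ((w (u j) : ℤ))
      ≤ (k : ℤ) - #(nonEdges G S) := by
    rw [← Nat.cast_sum]
    omega
  have hCSt : #(C \ S) ≤ t :=
    calc #(C \ S) ≤ #(univ.image u) := himgu ▸ card_le_card hCS
      _ ≤ t := card_image_le.trans_eq (card_fin t)
  have hle := histar.2 ⟨hCSt, hsum⟩
  have hcard := card_sdiff_add_card_eq_card hSC
  exact ⟨hsum, by omega⟩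
end

section
/- Let g be a finite simple graph, k a natural number, S ⊆ V(g), and let π_1, …, π_c be a partition of V(g)\S into independent sets of g. Then every k-defective clique C of g with S ⊆ C ⊆ V(g) satisfies |C| ≤ |S| + c + k − |Ē(S)|. -/
/-! Every class `C ∩ π i` of the partition is independent, so it carries at least
`|C ∩ π i| - 1` non-edges; these, together with the non-edges of `S`, are pairwise distinct
non-edges of `C`. Hence `|Ē(S)| + |C \ S| - c ≤ |Ē(C)| ≤ k`. -/

open Finset

variable {V : Type*} [Fintype V] [DecidableEq V]

namespace SimpleGraph

variable {α : Type*} [DecidableEq α] (G : SimpleGraph α) [DecidableRel G.Adj]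

lemma mem_nonEdges {T : Finset α} {x y : α} :
    s(x, y) ∈ nonEdges G T ↔ x ∈ T ∧ y ∈ T ∧ x ≠ y ∧ ¬ G.Adj x y := by
  simp only [nonEdges, mem_image, mem_filter, mem_product, Prod.exists, Sym2.eq_iff]
  constructor
  · rintro ⟨a, b, ⟨⟨ha, hb⟩, hne, hadj⟩, ⟨rfl, rfl⟩ | ⟨rfl, rfl⟩⟩
    · exact ⟨ha, hb, hne, hadj⟩
    · exact ⟨hb, ha, hne.symm, fun h => hadj h.symm⟩
  · rintro ⟨hx, hy, hne, hadj⟩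
    exact ⟨x, y, ⟨⟨hx, hy⟩, hne, hadj⟩, Or.inl ⟨rfl, rfl⟩⟩

lemma nonEdges_mono {T U : Finset α} (h : T ⊆ U) : nonEdges G T ⊆ nonEdges G U := by
  intro e he
  induction e using Sym2.ind with
  | _ x y =>
    obtain ⟨hx, hy, hxy⟩ := G.mem_nonEdges.1 he
    exact G.mem_nonEdges.2 ⟨h hx, h hy, hxy⟩

lemma disjoint_nonEdges {T U : Finset α} (h : Disjoint T U) :
    Disjoint (nonEdges G T) (nonEdges G U) := by
  refine Finset.disjoint_left.2 fun e heT heU => ?_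
  induction e using Sym2.ind with
  | _ x y => exact Finset.disjoint_left.1 h (G.mem_nonEdges.1 heT).1 (G.mem_nonEdges.1 heU).1

lemma card_nonEdges_add_card_nonEdges_le {T U : Finset α} (h : Disjoint T U) :
    #(nonEdges G T) + #(nonEdges G U) ≤ #(nonEdges G (T ∪ U)) := by
  rw [← card_union_of_disjoint (G.disjoint_nonEdges h)]
  exact card_le_card (union_subset (G.nonEdges_mono subset_union_left)
    (G.nonEdges_mono subset_union_right))

lemma sum_card_nonEdges_le {ι : Type*} (I : Finset ι) (s : ι → Finset α)
    (h : (I : Set ι).PairwiseDisjoint s) :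
    ∑ i ∈ I, #(nonEdges G (s i)) ≤ #(nonEdges G (I.biUnion s)) := by
  rw [← card_biUnion fun i hi j hj hij => G.disjoint_nonEdges (h hi hj hij)]
  exact card_le_card (biUnion_subset.2 fun i hi => G.nonEdges_mono (subset_biUnion_of_mem s hi))

lemma IsIndepSet.card_le_card_nonEdges_add_one {T : Finset α} (hT : G.IsIndepSet T) :
    #T ≤ #(nonEdges G T) + 1 := by
  rcases T.eq_empty_or_nonempty with rfl | ⟨t, ht⟩
  · simp
  have hstar : #(T.erase t) ≤ #(nonEdges G T) := by
    refine card_le_card_of_injOn (fun x => s(t, x)) (fun x hx => ?_) fun a _ b _ hab => ?_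
    · obtain ⟨hxt, hxT⟩ := mem_erase.1 hx
      exact G.mem_nonEdges.2 ⟨ht, hxT, hxt.symm, hT ht hxT hxt.symm⟩
    · exact Sym2.congr_right.1 hab
  rw [card_erase_of_mem ht] at hstar
  omega

lemma card_le_card_nonEdges_add_of_subset_biUnion {ι : Type*} (I : Finset ι)
    (π : ι → Finset α) (hdisj : (I : Set ι).PairwiseDisjoint π)
    (hind : ∀ i ∈ I, G.IsIndepSet (π i)) {T : Finset α} (hT : T ⊆ I.biUnion π) :
    #T ≤ #(nonEdges G T) + #I := by
  have hparts : T = I.biUnion fun i => T ∩ π i := by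
    rw [← inter_biUnion, inter_eq_left.2 hT]
  have hdisj' : (I : Set ι).PairwiseDisjoint fun i => T ∩ π i :=
    hdisj.mono fun i => inter_subset_right
  calc #T = ∑ i ∈ I, #(T ∩ π i) := (congrArg card hparts).trans (card_biUnion hdisj')
    _ ≤ ∑ i ∈ I, (#(nonEdges G (T ∩ π i)) + 1) := sum_le_sum fun i hi =>
        IsIndepSet.card_le_card_nonEdges_add_one G
          ((hind i hi).mono (coe_subset.2 inter_subset_right))
    _ = ∑ i ∈ I, #(nonEdges G (T ∩ π i)) + #I := by rw [sum_add_distrib, card_eq_sum_ones]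
    _ ≤ #(nonEdges G T) + #I := by
        grw [G.sum_card_nonEdges_le I _ hdisj', ← hparts]

end SimpleGraph

/-- If `π 0, …, π (c-1)` is a partition of `V(g) \ S` into independent sets, then every
`k`-defective clique `C` with `S ⊆ C` satisfies `|C| ≤ |S| + c + k − |Ē(S)|`. -/
theorem partition_upper_bound (G : SimpleGraph V) [DecidableRel G.Adj] (k : ℕ)
    (S : Finset V) {c : ℕ} (π : Fin c → Finset V)
    (hdisj : ∀ i j : Fin c, i ≠ j → Disjoint (π i) (π j))
    (hcover : Finset.univ.biUnion π = Finset.univ \ S)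
    (hind : ∀ i : Fin c, ∀ x ∈ π i, ∀ y ∈ π i, ¬ G.Adj x y)
    (C : Finset V) (hSC : S ⊆ C) (hC : (nonEdges G C).card ≤ k) :
    (C.card : ℤ) ≤ (S.card : ℤ) + c + k - ((nonEdges G S).card : ℤ) := by
  have hrest : #(C \ S) ≤ #(nonEdges G (C \ S)) + c := by
    simpa using G.card_le_card_nonEdges_add_of_subset_biUnion univ π
      (fun i _ j _ hij => hdisj i j hij) (fun i _ x hx y hy _ => hind i x hx y hy)
      (hcover ▸ sdiff_subset_sdiff (subset_univ C) subset_rfl)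
  have hsplit : #(nonEdges G S) + #(nonEdges G (C \ S)) ≤ #(nonEdges G C) := by
    simpa [union_sdiff_of_subset hSC] using
      G.card_nonEdges_add_card_nonEdges_le (disjoint_sdiff (s := S) (t := C))
  have hcard := card_sdiff_add_card_eq_card hSC
  omega
end

section
/- Let g be a finite simple graph, k a natural number, S ⊆ V(g), and let π_1, …, π_c be a partition of V(g)\S into independent sets of g. Then every k-defective clique C of g with S ⊆ C ⊆ V(g) satisfies |C| ≤ |S| + ∑_{i=1}^{c} min( ⌊(1 + √(8k + 1))/2⌋, |π_i| ) (correctness of the graph coloring-based upper bound of Chen et al.). -/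
open Finset

variable {V : Type*} [Fintype V] [DecidableEq V]

/-! Each colour class meets `C` in an independent set, all of whose `(#(C ∩ π i)).choose 2` pairs
are non-edges of `C`. So a `k`-defective clique meets `π i` in at most `m` vertices, `m` being the
largest integer with `m.choose 2 ≤ k`, namely `⌊(1 + √(8k + 1)) / 2⌋`; and the vertices of `C`
outside `S` are covered by the classes. -/

theorem choose_two_card_le_card_nonEdges {α : Type*} [DecidableEq α] (G : SimpleGraph α)
    [DecidableRel G.Adj] {A C : Finset α} (hAC : A ⊆ C) (hA : ∀ x ∈ A, ∀ y ∈ A, ¬ G.Adj x y) :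
    (#A).choose 2 ≤ #(nonEdges G C) := by
  rw [← Sym2.card_image_offDiag]
  refine card_le_card fun e he => ?_
  obtain ⟨⟨x, y⟩, hxy, rfl⟩ := mem_image.1 he
  obtain ⟨hx, hy, hne⟩ := mem_offDiag.1 hxy
  exact mem_image.2 ⟨(x, y), mem_filter.2 ⟨mem_product.2 ⟨hAC hx, hAC hy⟩, hne, hA x hx y hy⟩, rfl⟩

theorem le_floor_of_choose_two_le {m k : ℕ} (h : m.choose 2 ≤ k) :
    (m : ℤ) ≤ ⌊(1 + Real.sqrt (8 * (k : ℝ) + 1)) / 2⌋ := by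
  have hchoose : ((m.choose 2 : ℕ) : ℝ) ≤ k := by exact_mod_cast h
  rw [Nat.cast_choose_two] at hchoose
  have hsq : (2 * (m : ℝ) - 1) ^ 2 ≤ 8 * k + 1 := by nlinarith
  have := Real.le_sqrt_of_sq_le hsq
  rw [Int.le_floor, le_div_iff₀ two_pos]
  push_cast
  linarith

theorem card_le_card_add_sum_card_inter {ι α : Type*} [DecidableEq α]
    {C S : Finset α} {s : Finset ι} {π : ι → Finset α} (hcover : C \ S ⊆ s.biUnion π) :
    #C ≤ #S + ∑ i ∈ s, #(C ∩ π i) := by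
  have hsplit : C \ S ⊆ s.biUnion fun i => C ∩ π i := fun x hx => by
    obtain ⟨i, hi, hxi⟩ := mem_biUnion.1 (hcover hx)
    exact mem_biUnion.2 ⟨i, hi, mem_inter.2 ⟨(mem_sdiff.1 hx).1, hxi⟩⟩
  calc #C ≤ #(C \ S) + #S := card_le_card_sdiff_add_card
    _ ≤ #(s.biUnion fun i => C ∩ π i) + #S := by gcongr
    _ ≤ #S + ∑ i ∈ s, #(C ∩ π i) := by rw [add_comm]; gcongr; exact card_biUnion_le

theorem chen_coloring_upper_bound_general (G : SimpleGraph V) [DecidableRel G.Adj] (k : ℕ)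
    (S : Finset V) {c : ℕ} (π : Fin c → Finset V)
    (hcover : Finset.univ.biUnion π = Finset.univ \ S)
    (hind : ∀ i : Fin c, ∀ x ∈ π i, ∀ y ∈ π i, ¬ G.Adj x y)
    (C : Finset V) (hC : (nonEdges G C).card ≤ k) :
    (C.card : ℤ) ≤ (S.card : ℤ)
      + ∑ i : Fin c, min (⌊(1 + Real.sqrt (8 * (k : ℝ) + 1)) / 2⌋) (((π i).card : ℤ)) := by
  have hC_cover : C \ S ⊆ univ.biUnion π := by
    rw [hcover]; exact sdiff_subset_sdiff (subset_univ C) subset_rfl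
  have hclass (i : Fin c) :
      (#(C ∩ π i) : ℤ) ≤ min ⌊(1 + Real.sqrt (8 * (k : ℝ) + 1)) / 2⌋ (#(π i) : ℤ) := by
    refine le_min (le_floor_of_choose_two_le ?_) (by exact_mod_cast card_le_card inter_subset_right)
    refine (choose_two_card_le_card_nonEdges G inter_subset_left fun x hx y hy => ?_).trans hC
    exact hind i x (mem_inter.1 hx).2 y (mem_inter.1 hy).2
  calc (#C : ℤ) ≤ #S + ∑ i, (#(C ∩ π i) : ℤ) := by
        exact_mod_cast card_le_card_add_sum_card_inter hC_cover
    _ ≤ _ := by gcongr with i; exact hclass i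

/-- Correctness of the graph coloring-based upper bound of Chen et al.: if
`π 0, …, π (c-1)` is a partition of `V(g) \ S` into independent sets, then every
`k`-defective clique `C` with `S ⊆ C` satisfies
`|C| ≤ |S| + ∑ i, min(⌊(1 + √(8k + 1))/2⌋, |π i|)`. -/
theorem chen_coloring_upper_bound (G : SimpleGraph V) [DecidableRel G.Adj] (k : ℕ)
    (S : Finset V) {c : ℕ} (π : Fin c → Finset V)
    (hdisj : ∀ i j : Fin c, i ≠ j → Disjoint (π i) (π j))
    (hcover : Finset.univ.biUnion π = Finset.univ \ S)
    (hind : ∀ i : Fin c, ∀ x ∈ π i, ∀ y ∈ π i, ¬ G.Adj x y)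
    (C : Finset V) (hSC : S ⊆ C) (hC : (nonEdges G C).card ≤ k) :
    (C.card : ℤ) ≤ (S.card : ℤ)
      + ∑ i : Fin c, min (⌊(1 + Real.sqrt (8 * (k : ℝ) + 1)) / 2⌋) (((π i).card : ℤ)) :=
  chen_coloring_upper_bound_general G k S π hcover hind C hC
end

section
/- Let k and k′ be natural numbers with k < k′, and let γ, γ′ ∈ (1, 2) be real numbers satisfying γ^{k+3} − 2γ^{k+2} + 1 = 0 and γ′^{k′+3} − 2γ′^{k′+2} + 1 = 0. Then γ < γ′. In particular γ_k < γ_{2k} for every k ≥ 1, so the time complexity O*(γ_k^n) of the kDC framework is strictly better than the complexity O*(γ_{2k}^n) of the MADEC⁺ algorithm. -/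
/-!
Dividing `x ^ (m + 1) - 2 * x ^ m + 1 = 0` by `x ^ (m + 1)` and summing a geometric series turns it
into `y + y ^ 2 + ⋯ + y ^ m = 1` for `y = x⁻¹`. The left side grows strictly with the number of
terms and weakly with `y`, so the longer sum (`m = k' + 2`) reaches `1` only at a smaller `y`,
that is, at a larger root `x`.
-/

open Finset

theorem sum_range_inv_pow_succ_eq_one {K : Type*} [Field K] {x : K} (hx0 : x ≠ 0) (hx1 : x ≠ 1)
    {m : ℕ} (h : x ^ (m + 1) - 2 * x ^ m + 1 = 0) :
    ∑ j ∈ range m, x⁻¹ ^ (j + 1) = 1 := by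
  have hinv1 : x⁻¹ - 1 ≠ 0 := sub_ne_zero.2 (by simpa using hx1)
  have hgeom : (∑ j ∈ range m, x⁻¹ ^ j) * (x⁻¹ - 1) = x⁻¹ ^ m - 1 := geom_sum_mul x⁻¹ m
  have hroot : x⁻¹ ^ (m + 1) - 2 * x⁻¹ + 1 = 0 := by
    rw [inv_pow, inv_eq_one_div, inv_eq_one_div]
    field_simp
    linear_combination x * h
  simp only [pow_succ, ← sum_mul]
  apply mul_left_cancel₀ hinv1
  linear_combination x⁻¹ * hgeom + hroot

theorem sum_range_pow_succ_lt_of_lt {R : Type*} [CommSemiring R] [PartialOrder R]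
    [IsStrictOrderedRing R] {y : R} (hy : 0 < y) {m n : ℕ} (hmn : m < n) :
    ∑ j ∈ range m, y ^ (j + 1) < ∑ j ∈ range n, y ^ (j + 1) :=
  sum_lt_sum_of_subset (range_subset_range.2 hmn.le) (mem_range.2 hmn) (by simp)
    (pow_pos hy _) fun _ _ _ => (pow_pos hy _).le

theorem sum_range_pow_succ_le_of_le {R : Type*} [CommSemiring R] [PartialOrder R]
    [IsOrderedRing R] {y z : R} (hy : 0 ≤ y) (hyz : y ≤ z) (m : ℕ) :
    ∑ j ∈ range m, y ^ (j + 1) ≤ ∑ j ∈ range m, z ^ (j + 1) :=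
  sum_le_sum fun _ _ => pow_le_pow_left₀ hy hyz _

theorem gamma_strict_mono_general (k k' : ℕ) (hkk' : k < k') (γ γ' : ℝ)
    (hγ1 : 1 < γ) (hγ'1 : 1 < γ')
    (hroot : γ ^ (k + 3) - 2 * γ ^ (k + 2) + 1 = 0)
    (hroot' : γ' ^ (k' + 3) - 2 * γ' ^ (k' + 2) + 1 = 0) :
    γ < γ' := by
  by_contra! hle
  have hsum := sum_range_inv_pow_succ_eq_one (by positivity) hγ1.ne' hroot
  have hsum' := sum_range_inv_pow_succ_eq_one (by positivity) hγ'1.ne' hroot'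
  have hinv : γ⁻¹ ≤ γ'⁻¹ := inv_anti₀ (by positivity) hle
  refine lt_irrefl (1 : ℝ) ?_
  calc 1 = ∑ j ∈ range (k + 2), γ⁻¹ ^ (j + 1) := hsum.symm
      _ ≤ ∑ j ∈ range (k + 2), γ'⁻¹ ^ (j + 1) :=
        sum_range_pow_succ_le_of_le (by positivity) hinv _
      _ < ∑ j ∈ range (k' + 2), γ'⁻¹ ^ (j + 1) :=
        sum_range_pow_succ_lt_of_lt (by positivity) (by omega)
      _ = 1 := hsum'

/-- If `k < k'` and `γ, γ' ∈ (1, 2)` satisfy `γ^{k+3} − 2γ^{k+2} + 1 = 0` and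
`γ'^{k'+3} − 2γ'^{k'+2} + 1 = 0`, then `γ < γ'`; in particular `γ_k < γ_{2k}`, so the
time complexity `O*(γ_k^n)` of kDC is strictly better than `O*(γ_{2k}^n)` of MADEC⁺. -/
theorem gamma_strict_mono (k k' : ℕ) (hkk' : k < k') (γ γ' : ℝ)
    (hγ1 : 1 < γ) (hγ2 : γ < 2) (hγ'1 : 1 < γ') (hγ'2 : γ' < 2)
    (hroot : γ ^ (k + 3) - 2 * γ ^ (k + 2) + 1 = 0)
    (hroot' : γ' ^ (k' + 3) - 2 * γ' ^ (k' + 2) + 1 = 0) :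
    γ < γ' :=
  gamma_strict_mono_general k k' hkk' γ γ' hγ1 hγ'1 hroot hroot'
end

section
/- Let γ > 1 be a real number and k a natural number such that γ^{k+3} − 2γ^{k+2} + 1 ≥ 0. Then for every natural number m with m ≥ k + 2, the inequality γ^{m−1} + γ^{m−2} + ⋯ + γ^{m−k−1} + γ^{m−k−2} ≤ γ^m holds (the key inequality establishing, by induction on search-tree nodes, that the number of leaf nodes of the kDC search tree rooted at a node of size s is at most γ_k^s). -/
open Finset

/-! Shifting out the common factor `γ ^ (m - k - 2)` reduces the claim to the geometric sum
`1 + γ + ⋯ + γ ^ (k + 1) ≤ γ ^ (k + 2)`. Multiplied by `γ - 1 > 0` this becomes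
`γ ^ (k + 2) - 1 ≤ γ ^ (k + 3) - γ ^ (k + 2)`, which is exactly the hypothesis on `γ`. -/

theorem geom_sum_le_pow_of_nonneg {R : Type*} [Field R] [LinearOrder R] [IsStrictOrderedRing R]
    {x : R} (hx : 1 < x) {n : ℕ} (h : 0 ≤ x ^ (n + 1) - 2 * x ^ n + 1) :
    ∑ i ∈ range n, x ^ i ≤ x ^ n := by
  refine le_of_mul_le_mul_right ?_ (sub_pos.mpr hx)
  rw [geom_sum_mul]
  linear_combination h

theorem sum_Icc_pow_sub_eq_pow_mul_geom_sum {R : Type*} [CommSemiring R] (x : R) (n t : ℕ) :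
    ∑ j ∈ Icc 1 n, x ^ (t + n - j) = x ^ t * ∑ i ∈ range n, x ^ i := by
  rw [mul_sum, ← sum_range_reflect]
  refine sum_nbij' (· - 1) (· + 1) ?_ ?_ ?_ ?_ ?_ <;> simp only [mem_Icc, mem_range]
  · intro j hj; omega
  · intro i hi; omega
  · intro j hj; omega
  · intro i hi; omega
  · intro j hj
    rw [← pow_add]
    congr 1
    omega

/-- The key inequality in the leaf-count analysis of the kDC search tree: if `γ > 1`
satisfies `γ^{k+3} − 2γ^{k+2} + 1 ≥ 0`, then for every `m ≥ k + 2`,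
`γ^{m−1} + γ^{m−2} + ⋯ + γ^{m−k−2} ≤ γ^m` (a sum of `k + 2` terms). -/
theorem kdc_key_inequality (k : ℕ) (γ : ℝ) (hγ : 1 < γ)
    (hroot : 0 ≤ γ ^ (k + 3) - 2 * γ ^ (k + 2) + 1)
    (m : ℕ) (hm : k + 2 ≤ m) :
    ∑ j ∈ Finset.Icc 1 (k + 2), γ ^ (m - j) ≤ γ ^ m := by
  obtain ⟨t, rfl⟩ : ∃ t, m = t + (k + 2) := ⟨m - (k + 2), by omega⟩
  rw [sum_Icc_pow_sub_eq_pow_mul_geom_sum, pow_add]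
  exact mul_le_mul_of_nonneg_left (geom_sum_le_pow_of_nonneg hγ hroot) (by positivity)
end
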